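/- With notation as above, for \alpha \ne 0, the coadjoint orbit of l_{\alpha,\gamma_2} = l(\alpha,0,0,0,\gamma_2,0) under N equals the set \{\alpha Z^* + t_1 Y_1^* + t_2 Y_2^* + s_1 X_1^* + (\gamma_2 + t_1 t_2/\alpha) X_2^* + s_2 X_3^* : t_1, t_2, s_1, s_2 \in \mathbb{R}\}, a 4-dimensional submanifold of \mathfrak{n}^*. -/

import Mathlib

open Matrix

def E (i j : Fin 4) : Matrix (Fin 4) (Fin 4) ℝ := Matrix.single i j 1

def nmat (z y₁ y₂ x₁ x₂ x₃ : ℝ) : Matrix (Fin 4) (Fin 4) ℝ :=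
  x₁ • E 1 0 + x₂ • E 2 1 + x₃ • E 3 2 + y₁ • E 2 0 + y₂ • E 3 1 + z • E 3 0

/-- Element `l(α,β₁,β₂,γ₁,γ₂,γ₃) = αZ* + β₁Y₁* + β₂Y₂* + γ₁X₁* + γ₂X₂* + γ₃X₃*` of 𝔫*,
realized as a strictly upper triangular matrix. -/
def lmat (α β₁ β₂ γ₁ γ₂ γ₃ : ℝ) : Matrix (Fin 4) (Fin 4) ℝ :=
  γ₁ • E 0 1 + β₁ • E 0 2 + α • E 0 3 + γ₂ • E 1 2 + β₂ • E 1 3 + γ₃ • E 2 3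

/-- The coadjoint action `Ad*(g)l` of `g ∈ N` on `l ∈ 𝔫*`, expressed again as a strictly
upper triangular matrix: its coordinates are the pairings `X ↦ tr(l · g⁻¹ X g)` against
the basis `Z = E₄₁, Y₁ = E₃₁, Y₂ = E₄₂, X₁ = E₂₁, X₂ = E₃₂, X₃ = E₄₃` of 𝔫. -/
noncomputable def coadMat (g l : Matrix (Fin 4) (Fin 4) ℝ) : Matrix (Fin 4) (Fin 4) ℝ :=
  lmat (Matrix.trace (l * (g⁻¹ * E 3 0 * g)))
       (Matrix.trace (l * (g⁻¹ * E 2 0 * g)))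
       (Matrix.trace (l * (g⁻¹ * E 3 1 * g)))
       (Matrix.trace (l * (g⁻¹ * E 1 0 * g)))
       (Matrix.trace (l * (g⁻¹ * E 2 1 * g)))
       (Matrix.trace (l * (g⁻¹ * E 3 2 * g)))

/-!
Pairing against the basis of `𝔫` through the trace identifies `Ad*(g) l` with the strictly upper
triangular part of `g l g⁻¹`. Every `n ∈ 𝔫` satisfies `n ^ 4 = 0`, so `exp n` and `exp (-n)` are
cubic polynomials in `n` and the action on `l(α,0,0,0,γ₂,0)` can be computed entry by entry: it is
`l(α, -αx₃, αx₁, αx₂x₃/2 - αy₂, γ₂ - αx₁x₃, αy₁ + αx₁x₂/2)`. With `t₁ = -αx₃`, `t₂ = αx₁` the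
`X₂*`-coordinate is `γ₂ + t₁t₂/α`, and since `α ≠ 0` the four free coordinates are reached by
solving linearly for `x₃, x₁, y₂, y₁`.
-/

theorem exp_eq_sum_range_of_pow_eq_zero (𝕂 : Type*) {𝔸 : Type*} [Field 𝕂] [CharZero 𝕂] [Ring 𝔸]
    [Algebra 𝕂 𝔸] [TopologicalSpace 𝔸] [IsTopologicalRing 𝔸] {x : 𝔸} {k : ℕ} (hx : x ^ k = 0) :
    NormedSpace.exp x = ∑ n ∈ Finset.range k, (n.factorial⁻¹ : 𝕂) • x ^ n := by
  rw [NormedSpace.exp_eq_tsum 𝕂]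
  refine tsum_eq_sum fun n hn => ?_
  rw [pow_eq_zero_of_le (by simpa using hn) hx, smul_zero]

theorem Matrix.trace_mul_conj_single {n R : Type*} [Fintype n] [DecidableEq n] [CommSemiring R]
    (l g h : Matrix n n R) (i j : n) :
    trace (l * (h * single i j 1 * g)) = (g * l * h) j i := by
  rw [← Matrix.mul_assoc, ← Matrix.mul_assoc, trace_mul_comm, ← Matrix.mul_assoc,
    ← Matrix.mul_assoc, trace_mul_single]
  simp

theorem coadMat_eq_conj (g l : Matrix (Fin 4) (Fin 4) ℝ) :
    coadMat g l = lmat ((g * l * g⁻¹) 0 3) ((g * l * g⁻¹) 0 2) ((g * l * g⁻¹) 1 3)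
      ((g * l * g⁻¹) 0 1) ((g * l * g⁻¹) 1 2) ((g * l * g⁻¹) 2 3) := by
  simp only [coadMat, E, trace_mul_conj_single]

theorem nmat_eq_matrix (z y₁ y₂ x₁ x₂ x₃ : ℝ) :
    nmat z y₁ y₂ x₁ x₂ x₃ = !![0, 0, 0, 0; x₁, 0, 0, 0; y₁, x₂, 0, 0; z, y₂, x₃, 0] := by
  ext i j
  fin_cases i <;> fin_cases j <;> simp [nmat, E, single]

theorem lmat_eq_matrix (α β₁ β₂ γ₁ γ₂ γ₃ : ℝ) :
    lmat α β₁ β₂ γ₁ γ₂ γ₃ = !![0, γ₁, β₁, α; 0, 0, γ₂, β₂; 0, 0, 0, γ₃; 0, 0, 0, 0] := by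
  ext i j
  fin_cases i <;> fin_cases j <;> simp [lmat, E, single]

theorem nmat_pow_four (z y₁ y₂ x₁ x₂ x₃ : ℝ) : nmat z y₁ y₂ x₁ x₂ x₃ ^ 4 = 0 := by
  ext i j
  fin_cases i <;> fin_cases j <;> simp [nmat_eq_matrix, pow_succ, mul_apply, Fin.sum_univ_four]

theorem exp_nmat (z y₁ y₂ x₁ x₂ x₃ : ℝ) :
    NormedSpace.exp (nmat z y₁ y₂ x₁ x₂ x₃) =
      !![1, 0, 0, 0;
         x₁, 1, 0, 0;
         y₁ + x₁ * x₂ / 2, x₂, 1, 0;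
         z + (x₁ * y₂ + x₃ * y₁) / 2 + x₁ * x₂ * x₃ / 6, y₂ + x₂ * x₃ / 2, x₃, 1] := by
  rw [exp_eq_sum_range_of_pow_eq_zero ℝ (nmat_pow_four z y₁ y₂ x₁ x₂ x₃), nmat_eq_matrix]
  ext i j
  fin_cases i <;> fin_cases j <;>
    simp [Finset.sum_range_succ, Nat.factorial, pow_succ, one_apply] <;> ring

theorem neg_nmat (z y₁ y₂ x₁ x₂ x₃ : ℝ) :
    -nmat z y₁ y₂ x₁ x₂ x₃ = nmat (-z) (-y₁) (-y₂) (-x₁) (-x₂) (-x₃) := by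
  simp only [nmat, neg_smul]
  abel

theorem coadMat_exp_nmat (α γ₂ z y₁ y₂ x₁ x₂ x₃ : ℝ) :
    coadMat (NormedSpace.exp (nmat z y₁ y₂ x₁ x₂ x₃)) (lmat α 0 0 0 γ₂ 0) =
      lmat α (-(α * x₃)) (α * x₁) (α * x₂ * x₃ / 2 - α * y₂) (γ₂ - α * x₁ * x₃)
        (α * y₁ + α * x₁ * x₂ / 2) := by
  rw [coadMat_eq_conj, ← Matrix.exp_neg, neg_nmat, exp_nmat, exp_nmat, lmat_eq_matrix α 0 0 0 γ₂ 0]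
  congr 1 <;> simp [mul_apply, Fin.sum_univ_four] <;> ring

/-- For `α ≠ 0`, the coadjoint orbit of `l_{α,γ₂} = l(α,0,0,0,γ₂,0)` under
`N = exp 𝔫` equals
`{αZ* + t₁Y₁* + t₂Y₂* + s₁X₁* + (γ₂ + t₁t₂/α)X₂* + s₂X₃* : t₁,t₂,s₁,s₂ ∈ ℝ}`. -/
theorem coadjoint_orbit_case_I (α γ₂ : ℝ) (hα : α ≠ 0) :
    {l' : Matrix (Fin 4) (Fin 4) ℝ | ∃ z y₁ y₂ x₁ x₂ x₃ : ℝ,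
        l' = coadMat (NormedSpace.exp (nmat z y₁ y₂ x₁ x₂ x₃)) (lmat α 0 0 0 γ₂ 0)}
      = {l' : Matrix (Fin 4) (Fin 4) ℝ | ∃ t₁ t₂ s₁ s₂ : ℝ,
          l' = lmat α t₁ t₂ s₁ (γ₂ + t₁ * t₂ / α) s₂} := by
  ext l'
  simp only [coadMat_exp_nmat]
  constructor
  · rintro ⟨z, y₁, y₂, x₁, x₂, x₃, rfl⟩
    refine ⟨-(α * x₃), α * x₁, α * x₂ * x₃ / 2 - α * y₂, α * y₁ + α * x₁ * x₂ / 2, ?_⟩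
    congr 1
    field_simp
    ring
  · rintro ⟨t₁, t₂, s₁, s₂, rfl⟩
    refine ⟨0, s₂ / α, -s₁ / α, t₂ / α, 0, -t₁ / α, ?_⟩
    congr 1 <;> field_simp <;> ring
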